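/- arXiv:2209.03482 — 3 statements merged into one kernel-verified Lean document; each statement's English description precedes it below -/
import Mathlib

section
/- Let f : ℝ^m → ℝ be a convex differentiable function, let A ⊆ {1,…,m}, let λ > 0, and let η̂ be a global minimizer of η ↦ f(η) + λ·Σ_{j∈A}|η_j|. Then for every η* ∈ ℝ^m, writing Δ = η̂ − η* and S = {j : η*_j ≠ 0}, the first-order difference D := Δ·(∇f(η̂) − ∇f(η*)) satisfies D ≤ λ‖Δ_{A∩S}‖₁ − λ‖Δ_{A∖S}‖₁ + ‖Δ‖₁·‖∇f(η*)‖_∞. -/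
open Finset Set

/-!
Minimality of `η̂` for `f + g`, with `g` the convex penalty, gives the first-order condition
`g η̂ - g η* ≤ ∇f(η̂) · (η* - η̂)` by differentiating along the segment from `η̂` to `η*`.
Splitting the penalty difference over the support of `η*` bounds `∇f(η̂) · Δ` by
`λ‖Δ_{A∩S}‖₁ - λ‖Δ_{A∖S}‖₁`, and Hölder's inequality bounds `-∇f(η*) · Δ` by `‖Δ‖₁ ‖∇f(η*)‖_∞`.
-/

theorem map_eq_sum_smul_single {ι R M F : Type*} [Fintype ι] [DecidableEq ι] [Semiring R]
    [AddCommMonoid M] [Module R M] [FunLike F (ι → R) M] [LinearMapClass F R (ι → R) M]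
    (L : F) (x : ι → R) : L x = ∑ i, x i • L (Pi.single i 1) := by
  conv_lhs => rw [pi_eq_sum_univ' x]
  simp only [map_sum, map_smul]

theorem abs_map_le_sum_abs_mul_iSup {ι F : Type*} [Fintype ι] [DecidableEq ι]
    [FunLike F (ι → ℝ) ℝ] [LinearMapClass F ℝ (ι → ℝ) ℝ] (L : F) (x : ι → ℝ) :
    |L x| ≤ (∑ i, |x i|) * ⨆ i, |L (Pi.single i 1)| := by
  have hbdd : BddAbove (range fun i => |L (Pi.single i 1)|) := (finite_range _).bddAbove
  calc |L x| = |∑ i, x i * L (Pi.single i 1)| := by rw [map_eq_sum_smul_single L x]; rfl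
    _ ≤ ∑ i, |x i| * |L (Pi.single i 1)| := by
      simpa only [abs_mul] using abs_sum_le_sum_abs (fun i => x i * L (Pi.single i 1)) univ
    _ ≤ ∑ i, |x i| * ⨆ i, |L (Pi.single i 1)| :=
      sum_le_sum fun i _ => mul_le_mul_of_nonneg_left (le_ciSup hbdd i) (abs_nonneg _)
    _ = _ := (sum_mul _ _ _).symm

theorem convexOn_sum_abs {ι : Type*} (A : Finset ι) :
    ConvexOn ℝ univ fun x : ι → ℝ => ∑ j ∈ A, |x j| := by
  classical
  induction A using Finset.induction_on with
  | empty => simpa using convexOn_const (0 : ℝ) convex_univ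
  | insert j A hj ih =>
    simp only [sum_insert hj]
    exact ((convexOn_norm convex_univ).comp_linearMap (LinearMap.proj j)).add ih

theorem sum_abs_sub_sum_abs_le {ι : Type*} (A : Finset ι) (a b : ι → ℝ)
    [DecidablePred fun j => b j ≠ 0] [DecidablePred fun j => b j = 0] :
    ∑ j ∈ A, |b j| - ∑ j ∈ A, |a j|
      ≤ ∑ j ∈ A.filter (fun j => b j ≠ 0), |a j - b j|
        - ∑ j ∈ A.filter (fun j => b j = 0), |a j - b j| := by
  have hsupp : ∑ j ∈ A.filter (fun j => b j ≠ 0), (|b j| - |a j|)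
      ≤ ∑ j ∈ A.filter (fun j => b j ≠ 0), |a j - b j| :=
    sum_le_sum fun j _ => (abs_sub_abs_le_abs_sub _ _).trans_eq (abs_sub_comm _ _)
  have hoff : ∑ j ∈ A.filter (fun j => b j = 0), (|b j| - |a j|)
      = -∑ j ∈ A.filter (fun j => b j = 0), |a j - b j| := by
    rw [← sum_neg_distrib]
    refine sum_congr rfl fun j hj => ?_
    simp [(mem_filter.1 hj).2]
  rw [← sum_sub_distrib, ← sum_filter_add_sum_filter_not A (fun j => b j ≠ 0)]
  simp only [not_not]
  linarith

theorem ConvexOn.sub_le_fderiv_of_isMinOn_add {E : Type*} [NormedAddCommGroup E]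
    [NormedSpace ℝ E] {f g : E → ℝ} {s : Set E} {x y : E} (hg : ConvexOn ℝ s g)
    (hf : DifferentiableAt ℝ f x) (hmin : IsMinOn (f + g) s x) (hx : x ∈ s) (hy : y ∈ s) :
    g x - g y ≤ fderiv ℝ f x (y - x) := by
  -- convexity of `g` on the segment makes `h` minimal on `[0, 1]` at `t = 0`
  set h : ℝ → ℝ := fun t => f (x + t • (y - x)) - t * (g x - g y)
  have hderiv : HasDerivAt h (fderiv ℝ f x (y - x) - (g x - g y)) 0 := by
    have hline : HasDerivAt (fun t : ℝ => x + t • (y - x)) (y - x) 0 := by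
      simpa using ((hasDerivAt_id (0 : ℝ)).smul_const (y - x)).const_add x
    exact (hf.hasFDerivAt.comp_hasDerivAt_of_eq 0 hline (by simp)).sub
      (hasDerivAt_mul_const (g x - g y))
  have hlocal : IsLocalMinOn h (Icc 0 1) 0 := by
    refine IsMinOn.localize fun t ⟨ht0, ht1⟩ => ?_
    have hmem : x + t • (y - x) = (1 - t) • x + t • y := by
      rw [sub_smul, one_smul, smul_sub]; abel
    have hconv := hg.2 hx hy (sub_nonneg.2 ht1) ht0 (sub_add_cancel 1 t)
    have hmin_t := hmin (hmem ▸ hg.1 hx hy (sub_nonneg.2 ht1) ht0 (sub_add_cancel 1 t))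
    simp only [mem_ofPred_eq, Pi.add_apply, hmem] at hmin_t
    simp only [smul_eq_mul] at hconv
    simp only [h, mem_ofPred_eq, zero_smul, add_zero, zero_mul, sub_zero, hmem]
    nlinarith
  simpa using hlocal.hasFDerivWithinAt_nonneg hderiv.hasFDerivAt.hasFDerivWithinAt
    (y := 1) (mem_posTangentConeAt_of_segment_subset (by simp [segment_eq_Icc]))

open Classical in
theorem penalized_basic_inequality_general
    {m : ℕ} (f : (Fin m → ℝ) → ℝ)
    (hdiff : Differentiable ℝ f)
    (A : Finset (Fin m)) (lam : ℝ) (hlam : 0 < lam) (etahat : Fin m → ℝ)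
    (hmin : ∀ η : Fin m → ℝ,
      f etahat + lam * ∑ j ∈ A, |etahat j| ≤ f η + lam * ∑ j ∈ A, |η j|)
    (etastar : Fin m → ℝ) :
    ∑ j, (etahat j - etastar j) *
        (fderiv ℝ f etahat (Pi.single j 1) - fderiv ℝ f etastar (Pi.single j 1))
      ≤ lam * (∑ j ∈ A.filter (fun j => etastar j ≠ 0), |etahat j - etastar j|)
        - lam * (∑ j ∈ A.filter (fun j => etastar j = 0), |etahat j - etastar j|)
        + (∑ j, |etahat j - etastar j|)
          * (⨆ j : Fin m, |fderiv ℝ f etastar (Pi.single j 1)|) := by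
  have hpairing : ∑ j, (etahat j - etastar j) * (fderiv ℝ f etahat (Pi.single j 1)
      - fderiv ℝ f etastar (Pi.single j 1))
      = fderiv ℝ f etahat (etahat - etastar) - fderiv ℝ f etastar (etahat - etastar) := by
    simp only [mul_sub, sum_sub_distrib, map_eq_sum_smul_single _ (etahat - etastar),
      Pi.sub_apply, smul_eq_mul]
  have hoptimality := ((convexOn_sum_abs A).smul hlam.le).sub_le_fderiv_of_isMinOn_add
    (hdiff etahat) (isMinOn_univ_iff.2 hmin) (mem_univ _) (mem_univ etastar)
  rw [← neg_sub etahat etastar, map_neg, smul_eq_mul, smul_eq_mul] at hoptimality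
  have hsplit := mul_le_mul_of_nonneg_left (sum_abs_sub_sum_abs_le A etahat etastar) hlam.le
  have hholder := abs_map_le_sum_abs_mul_iSup (fderiv ℝ f etastar) (etahat - etastar)
  simp only [Pi.sub_apply] at hholder
  rw [hpairing]
  linarith [neg_abs_le (fderiv ℝ f etastar (etahat - etastar))]

open Classical in
/-- Basic inequality for the partially ℓ₁-penalized estimator: if
`η̂` globally minimizes `η ↦ f(η) + λ·Σ_{j∈A}|η_j|`, then for every `η*`, with
`Δ = η̂ − η*` and `S = supp(η*)`, the first-order difference
`D = Δ·(∇f(η̂) − ∇f(η*))` satisfies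
`D ≤ λ‖Δ_{A∩S}‖₁ − λ‖Δ_{A∖S}‖₁ + ‖Δ‖₁·‖∇f(η*)‖_∞`. -/
theorem penalized_basic_inequality
    {m : ℕ} (f : (Fin m → ℝ) → ℝ)
    (hconv : ConvexOn ℝ Set.univ f) (hdiff : Differentiable ℝ f)
    (A : Finset (Fin m)) (lam : ℝ) (hlam : 0 < lam) (etahat : Fin m → ℝ)
    (hmin : ∀ η : Fin m → ℝ,
      f etahat + lam * ∑ j ∈ A, |etahat j| ≤ f η + lam * ∑ j ∈ A, |η j|)
    (etastar : Fin m → ℝ) :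
    ∑ j, (etahat j - etastar j) *
        (fderiv ℝ f etahat (Pi.single j 1) - fderiv ℝ f etastar (Pi.single j 1))
      ≤ lam * (∑ j ∈ A.filter (fun j => etastar j ≠ 0), |etahat j - etastar j|)
        - lam * (∑ j ∈ A.filter (fun j => etastar j = 0), |etahat j - etastar j|)
        + (∑ j, |etahat j - etastar j|)
          * (⨆ j : Fin m, |fderiv ℝ f etastar (Pi.single j 1)|) :=
  penalized_basic_inequality_general f hdiff A lam hlam etahat hmin etastar
end

section
/- Let b(t) = log(1 + exp(t)) with b'(t) = e^t/(1+e^t) (the logistic sigmoid). Then for all real t and t₁, |b'(t₁) − b'(t)| ≤ (exp(|t₁ − t|) − 1)·b'(t). -/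
/-- For the logistic sigmoid `b'(t) = e^t/(1+e^t)`, the relative
Lipschitz bound `|b'(t₁) − b'(t)| ≤ (exp(|t₁ − t|) − 1)·b'(t)` holds for all
real `t, t₁`. -/
theorem logistic_sigmoid_relative_lipschitz :
    ∀ t t₁ : ℝ,
      |Real.exp t₁ / (1 + Real.exp t₁) - Real.exp t / (1 + Real.exp t)|
        ≤ (Real.exp |t₁ - t| - 1) * (Real.exp t / (1 + Real.exp t)) := by
  intro t t₁
  have h1 : (0:ℝ) < 1 + Real.exp t := by positivity
  have h2 : (0:ℝ) < 1 + Real.exp t₁ := by positivity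
  have key : Real.exp t₁ / (1 + Real.exp t₁) - Real.exp t / (1 + Real.exp t)
      = (Real.exp t₁ - Real.exp t) / ((1 + Real.exp t₁) * (1 + Real.exp t)) := by
    field_simp
    ring
  rw [key, abs_div, abs_of_pos (by positivity : (0:ℝ) < (1 + Real.exp t₁) * (1 + Real.exp t)),
    div_le_iff₀ (by positivity)]
  have hb : |Real.exp t₁ - Real.exp t| ≤ (Real.exp |t₁ - t| - 1) * Real.exp t := by
    rcases le_total t t₁ with h | h
    · rw [abs_of_nonneg (sub_nonneg.mpr (Real.exp_le_exp.mpr h)),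
        abs_of_nonneg (sub_nonneg.mpr h)]
      rw [sub_mul, Real.exp_sub, one_mul, div_mul_cancel₀ _ (Real.exp_ne_zero t)]
    · rw [abs_of_nonpos (sub_nonpos.mpr (Real.exp_le_exp.mpr h)),
        abs_of_nonpos (sub_nonpos.mpr h), neg_sub, neg_sub]
      have hu : 1 ≤ Real.exp (t - t₁) := Real.one_le_exp (by linarith)
      have he : Real.exp (t - t₁) * Real.exp t₁ = Real.exp t := by
        rw [← Real.exp_add]; ring_nf
      nlinarith [Real.exp_pos t₁, Real.exp_pos t, sq_nonneg (Real.exp (t - t₁) - 1)]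
  have hnn : 0 ≤ Real.exp |t₁ - t| - 1 := by
    have := Real.one_le_exp (abs_nonneg (t₁ - t)); linarith
  have : (Real.exp |t₁ - t| - 1) * (Real.exp t / (1 + Real.exp t)) *
      ((1 + Real.exp t₁) * (1 + Real.exp t))
      = (Real.exp |t₁ - t| - 1) * Real.exp t * (1 + Real.exp t₁) := by
    field_simp
  rw [this]
  nlinarith [mul_nonneg (mul_nonneg hnn (Real.exp_pos t).le) (Real.exp_pos t₁).le]
end

section
/- Let b(t) = log(1 + exp(t)) with b''(t) = e^t/(1+e^t)². Then for all real t and t₁, |b''(t₁) − b''(t)| ≤ (exp(|t₁ − t|) − 1)·b''(t). -/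
lemma logistic_key (s t : ℝ) :
    Real.exp s / (1 + Real.exp s) ^ 2
      ≤ Real.exp |s - t| * (Real.exp t / (1 + Real.exp t) ^ 2) := by
  have ha := Real.exp_pos t
  have hb := Real.exp_pos s
  have h1 : (0:ℝ) < (1 + Real.exp t) ^ 2 := by positivity
  have h2 : (0:ℝ) < (1 + Real.exp s) ^ 2 := by positivity
  rw [mul_div_assoc', div_le_div_iff₀ h2 h1]
  rcases le_total t s with h | h
  · rw [abs_of_nonneg (by linarith : (0:ℝ) ≤ s - t)]
    have hE : Real.exp (s - t) * Real.exp t = Real.exp s := by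
      rw [← Real.exp_add]; ring_nf
    have hab : Real.exp t ≤ Real.exp s := Real.exp_le_exp.2 h
    rw [hE]
    nlinarith [mul_pos hb ha, sq_nonneg (Real.exp s - Real.exp t)]
  · rw [abs_of_nonpos (by linarith : s - t ≤ (0:ℝ))]
    have hE : Real.exp (-(s - t)) * Real.exp s = Real.exp t := by
      rw [← Real.exp_add]; ring_nf
    have hab : Real.exp s ≤ Real.exp t := Real.exp_le_exp.2 h
    have hE2 := Real.exp_pos (-(s - t))
    nlinarith [sq_nonneg (Real.exp s - Real.exp t), mul_pos ha hb,
      mul_pos hb hb, sq_nonneg (Real.exp s * Real.exp t - Real.exp s)]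

/-- For the logistic second derivative `b''(t) = e^t/(1+e^t)²`,
the relative Lipschitz bound `|b''(t₁) − b''(t)| ≤ (exp(|t₁ − t|) − 1)·b''(t)`
holds for all real `t, t₁`. -/
theorem logistic_second_deriv_relative_lipschitz :
    ∀ t t₁ : ℝ,
      |Real.exp t₁ / (1 + Real.exp t₁) ^ 2 - Real.exp t / (1 + Real.exp t) ^ 2|
        ≤ (Real.exp |t₁ - t| - 1) * (Real.exp t / (1 + Real.exp t) ^ 2) := by
  intro t t₁
  set f := Real.exp t / (1 + Real.exp t) ^ 2 with hf
  set f₁ := Real.exp t₁ / (1 + Real.exp t₁) ^ 2 with hf₁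
  set E := Real.exp |t₁ - t| with hE
  have h1 : f₁ ≤ E * f := logistic_key t₁ t
  have h2 : f ≤ E * f₁ := by
    have := logistic_key t t₁
    rwa [abs_sub_comm t t₁] at this
  have hfpos : 0 < f := by positivity
  have hf₁pos : 0 < f₁ := by positivity
  have hEpos : 0 < E := Real.exp_pos _
  rw [abs_le]
  constructor
  · nlinarith [sq_nonneg (E - 1)]
  · linarith
end
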